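/- arXiv:1609.01789 — 2 statements merged into one kernel-verified Lean document; each statement's English description precedes it below -/
import Mathlib

section
/- If S ∈ PIFSpec_d, then {x ∈ ℕ : x + 1 ∈ S} ∈ PIFSpec_d. (Deleting one element: given a structure with d partial injective functions and a distinguished element a, removing a and adding 2d new unary predicates recording which elements mapped to a or were images of a yields a structure interpretable back, so the predecessor-shifted spectrum is realized with the same number of function symbols.) -/
open FirstOrder

/-- The vocabulary with u unary relation symbols and d binary relation symbols
(the latter to be interpreted as graphs of partial injective functions). -/
def pifLang (u d : ℕ) : Language where
  Functions := fun _ => Empty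
  Relations := fun n => match n with
    | 1 => Fin u
    | 2 => Fin d
    | _ => Empty

/-- A binary relation symbol of `pifLang u d`. -/
def pifRel (u d : ℕ) (i : Fin d) : (pifLang u d).Relations 2 := i

/-- Each binary relation is interpreted as the graph of a partial injective
function: it is functional and injective. -/
def IsPIFStructure {u d : ℕ} {M : Type} (St : (pifLang u d).Structure M) : Prop :=
  ∀ i : Fin d,
    (∀ a b c : M, St.RelMap (pifRel u d i) ![a, b] → St.RelMap (pifRel u d i) ![a, c] → b = c) ∧
    (∀ a b c : M, St.RelMap (pifRel u d i) ![a, c] → St.RelMap (pifRel u d i) ![b, c] → a = b)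

/-- The spectrum of φ among PIF structures: the cardinalities of its finite
models in which all binary relations are partial injective functions. -/
def pifSpectrum {u d : ℕ} (φ : (pifLang u d).Sentence) : Set ℕ :=
  {N | ∃ (M : Type) (St : (pifLang u d).Structure M),
    Finite M ∧ Nat.card M = N ∧ IsPIFStructure St ∧
    @FirstOrder.Language.Sentence.Realize (pifLang u d) M St φ}

/-- S ∈ PIFSpec_d: S is the spectrum of a first-order sentence over a vocabulary
with only unary relation symbols and d partial-injective-function symbols. -/
def PIFSpec (d : ℕ) (S : Set ℕ) : Prop :=
  ∃ (u : ℕ) (φ : (pifLang u d).Sentence),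
    (∀ M (St : (pifLang u d).Structure M), @FirstOrder.Language.Sentence.Realize (pifLang u d) M St φ → IsPIFStructure St) ∧
    S = pifSpectrum φ

/-!
Removing a point `a` from a model of `φ` loses no information if the remaining points carry
unary predicates recording everything about `a`: which unary predicates hold at `a`, and for
each partial injection which point it sends to `a`, which point it sends `a` to, and whether it
fixes `a`. Conversely any structure in the enlarged vocabulary is the deletion of a structure
on `Option M`, with `none` playing `a`. A formula is translated by remembering which of its
variables denote `a`; a quantifier becomes a conjunction of a quantifier over the remaining
points and the case of `a`. The binary relations of the small structure are restrictions of
those of the big one, so the translated sentence forces partial injections as `φ` does. This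
realises `{x | x + 1 ∈ S}` away from `0`, and the size `0` is put back by the disjunct
"the structure is empty" exactly when `1 ∈ S`.
-/

open FirstOrder Language

theorem FirstOrder.Language.Sentence.realize_cardGe_one {L : Language} {M : Type}
    [L.Structure M] : M ⊨ Sentence.cardGe L 1 ↔ Nonempty M := by
  rw [Sentence.realize_cardGe, Nat.cast_one, Cardinal.one_le_iff_ne_zero, Cardinal.mk_ne_zero_iff]

theorem IsPIFStructure.of_isEmpty {u d : ℕ} {M : Type} [IsEmpty M]
    (St : (pifLang u d).Structure M) : IsPIFStructure St :=
  fun _ => ⟨fun a => isEmptyElim a, fun a => isEmptyElim a⟩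

theorem PIFSpec.insert_zero {d : ℕ} {S : Set ℕ} (h : PIFSpec d S) : PIFSpec d (insert 0 S) := by
  obtain ⟨u, φ, hφ, rfl⟩ := h
  have realize_iff {M : Type} (St : (pifLang u d).Structure M) :
      M ⊨ φ ⊔ ∼(Sentence.cardGe _ 1) ↔ M ⊨ φ ∨ IsEmpty M := by
    rw [Sentence.realize_sup, Sentence.realize_not, Sentence.realize_cardGe_one, not_nonempty_iff]
  refine ⟨u, φ ⊔ ∼(Sentence.cardGe _ 1), fun M St hM => ?_, ?_⟩
  · rcases (realize_iff St).mp hM with hM | hM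
    · exact hφ M St hM
    · exact .of_isEmpty St
  ext N
  constructor
  · rintro (rfl | ⟨M, St, hfin, rfl, hpif, hM⟩)
    · let St : (pifLang u d).Structure Empty := ⟨fun f _ => Empty.elim f, fun _ _ => False⟩
      exact ⟨Empty, St, inferInstance, Nat.card_of_isEmpty, .of_isEmpty St,
        (realize_iff St).mpr (Or.inr inferInstance)⟩
    · exact ⟨M, St, hfin, rfl, hpif, (realize_iff St).mpr (Or.inl hM)⟩
  · rintro ⟨M, St, hfin, rfl, hpif, hM⟩
    rcases (realize_iff St).mp hM with hM | hM
    · exact Or.inr ⟨M, St, hfin, rfl, hpif, hM⟩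
    · exact Or.inl Nat.card_of_isEmpty

namespace PIFDeletion

variable {u d : ℕ} {M : Type}

def delUnary (u d : ℕ) : ℕ := u + u + d + d + d

-- The unary symbols of the enlarged vocabulary come in five consecutive blocks: `oldRel j`
-- is the old `j` on the remaining points, `atPoint j` says that `j` holds at the deleted point,
-- and `toPoint i`, `fromPoint i`, `loopAtPoint i` say `i m = a`, `i a = m`, `i a = a`.
-- `atPoint j` and `loopAtPoint i` do not depend on `m`: they hold everywhere or nowhere, and
-- are read back by an existential.
def oldRel (j : Fin u) : Fin (delUnary u d) := (((j.castAdd u).castAdd d).castAdd d).castAdd d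
def atPoint (j : Fin u) : Fin (delUnary u d) := (((j.natAdd u).castAdd d).castAdd d).castAdd d
def toPoint (i : Fin d) : Fin (delUnary u d) := ((i.natAdd (u + u)).castAdd d).castAdd d
def fromPoint (i : Fin d) : Fin (delUnary u d) := (i.natAdd (u + u + d)).castAdd d
def loopAtPoint (i : Fin d) : Fin (delUnary u d) := i.natAdd (u + u + d + d)

section restore

variable (St : (pifLang (delUnary u d) d).Structure M)

def restoreRel₁ (j : (pifLang u d).Relations 1) : Option M → Prop
  | some m => St.RelMap (n := 1) (oldRel j) ![m]
  | none => ∃ z, St.RelMap (n := 1) (atPoint j) ![z]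

def restoreRel₂ (i : (pifLang u d).Relations 2) : Option M → Option M → Prop
  | some m, some m' => St.RelMap (pifRel _ d i) ![m, m']
  | some m, none => St.RelMap (n := 1) (toPoint i) ![m]
  | none, some m' => St.RelMap (n := 1) (fromPoint i) ![m']
  | none, none => ∃ z, St.RelMap (n := 1) (loopAtPoint i) ![z]

@[reducible] def restoreStructure : (pifLang u d).Structure (Option M) where
  funMap f := Empty.elim f
  RelMap {l} R x := match l, R with
    | 1, j => restoreRel₁ St j (x 0)
    | 2, i => restoreRel₂ St i (x 0) (x 1)
    | 0, R | _ + 3, R => Empty.elim R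

theorem restoreStructure_relMap₁ (j : (pifLang u d).Relations 1) (x : Fin 1 → Option M) :
    (restoreStructure St).RelMap (n := 1) j x ↔ restoreRel₁ St j (x 0) := Iff.rfl

theorem restoreStructure_relMap₂ (i : (pifLang u d).Relations 2) (x : Fin 2 → Option M) :
    (restoreStructure St).RelMap (n := 2) i x ↔ restoreRel₂ St i (x 0) (x 1) := Iff.rfl

theorem _root_.IsPIFStructure.of_restoreStructure (h : IsPIFStructure (restoreStructure St)) :
    IsPIFStructure St := fun i =>
  ⟨fun a b c hb hc => Option.some_injective _ ((h i).1 (some a) (some b) (some c) hb hc),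
   fun a b c ha hb => Option.some_injective _ ((h i).2 (some a) (some b) (some c) ha hb)⟩

end restore

section delete

variable (St : (pifLang u d).Structure M) (a : M)

def deleteRel₁ : Fin (delUnary u d) → {y // y ≠ a} → Prop :=
  Fin.addCases (Fin.addCases (Fin.addCases (Fin.addCases
    (fun j m => St.RelMap (n := 1) j ![m.val])
    (fun j _ => St.RelMap (n := 1) j ![a]))
    (fun i m => St.RelMap (pifRel u d i) ![m.val, a]))
    (fun i m => St.RelMap (pifRel u d i) ![a, m.val]))
    (fun i _ => St.RelMap (pifRel u d i) ![a, a])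

theorem deleteRel₁_oldRel (j : Fin u) (m : {y // y ≠ a}) :
    deleteRel₁ St a (oldRel j) m ↔ St.RelMap (n := 1) j ![m.val] := by
  unfold deleteRel₁ oldRel
  simp only [Fin.addCases_left]

theorem deleteRel₁_atPoint (j : Fin u) (m : {y // y ≠ a}) :
    deleteRel₁ St a (atPoint j) m ↔ St.RelMap (n := 1) j ![a] := by
  unfold deleteRel₁ atPoint
  simp only [Fin.addCases_left, Fin.addCases_right]

theorem deleteRel₁_toPoint (i : Fin d) (m : {y // y ≠ a}) :
    deleteRel₁ St a (toPoint i) m ↔ St.RelMap (pifRel u d i) ![m.val, a] := by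
  unfold deleteRel₁ toPoint
  simp only [Fin.addCases_left, Fin.addCases_right]

theorem deleteRel₁_fromPoint (i : Fin d) (m : {y // y ≠ a}) :
    deleteRel₁ St a (fromPoint i) m ↔ St.RelMap (pifRel u d i) ![a, m.val] := by
  unfold deleteRel₁ fromPoint
  simp only [Fin.addCases_left, Fin.addCases_right]

theorem deleteRel₁_loopAtPoint (i : Fin d) (m : {y // y ≠ a}) :
    deleteRel₁ St a (loopAtPoint i) m ↔ St.RelMap (pifRel u d i) ![a, a] := by
  unfold deleteRel₁ loopAtPoint
  simp only [Fin.addCases_right]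

@[reducible] def deleteStructure : (pifLang (delUnary u d) d).Structure {y // y ≠ a} where
  funMap f := Empty.elim f
  RelMap {l} R x := match l, R with
    | 1, j => deleteRel₁ St a j (x 0)
    | 2, i => St.RelMap (pifRel u d i) ![(x 0).val, (x 1).val]
    | 0, R | _ + 3, R => Empty.elim R

theorem _root_.IsPIFStructure.deleteStructure {St : (pifLang u d).Structure M}
    (h : IsPIFStructure St) : IsPIFStructure (deleteStructure St a) := fun i =>
  ⟨fun _ _ _ hb hc => Subtype.ext ((h i).1 _ _ _ hb hc),
   fun _ _ _ ha hb => Subtype.ext ((h i).2 _ _ _ ha hb)⟩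

variable [Nonempty {y // y ≠ a}]

theorem restoreRel₁_deleteStructure (j : (pifLang u d).Relations 1) (y : Option {y // y ≠ a}) :
    restoreRel₁ (deleteStructure St a) j y ↔ St.RelMap j ![y.casesOn' a Subtype.val] := by
  cases y with
  | none => exact (exists_congr fun z => deleteRel₁_atPoint St a j z).trans (exists_const _)
  | some m => exact deleteRel₁_oldRel St a j m

theorem restoreRel₂_deleteStructure (i : (pifLang u d).Relations 2)
    (y y' : Option {y // y ≠ a}) :
    restoreRel₂ (deleteStructure St a) i y y' ↔
      St.RelMap i ![y.casesOn' a Subtype.val, y'.casesOn' a Subtype.val] := by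
  cases y with
  | none =>
    cases y' with
    | none => exact (exists_congr fun z => deleteRel₁_loopAtPoint St a i z).trans (exists_const _)
    | some m' => exact deleteRel₁_fromPoint St a i m'
  | some m =>
    cases y' with
    | none => exact deleteRel₁_toPoint St a i m
    | some m' => exact Iff.rfl

theorem realize_restoreStructure_deleteStructure (φ : (pifLang u d).Sentence) :
    @Sentence.Realize _ _ (restoreStructure (deleteStructure St a)) φ ↔
      @Sentence.Realize _ _ St φ := by
  classical
  let _ := St
  let _ := restoreStructure (deleteStructure St a)
  let e : Option {y // y ≠ a} ≃[pifLang u d] M :=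
    { toEquiv := Equiv.optionSubtypeNe a
      map_fun' := fun f => Empty.elim f
      map_rel' := fun {l} R x => by
        match l, R with
        | 0, R | _ + 3, R => exact Empty.elim R
        | 1, j =>
          rw [show (Equiv.optionSubtypeNe a).toFun ∘ x = ![Equiv.optionSubtypeNe a (x 0)] from
              List.ofFn_inj.mp rfl,
            Equiv.optionSubtypeNe_apply, restoreStructure_relMap₁, restoreRel₁_deleteStructure]
        | 2, i =>
          rw [show (Equiv.optionSubtypeNe a).toFun ∘ x =
                ![Equiv.optionSubtypeNe a (x 0), Equiv.optionSubtypeNe a (x 1)] from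
              List.ofFn_inj.mp rfl,
            Equiv.optionSubtypeNe_apply, Equiv.optionSubtypeNe_apply, restoreStructure_relMap₂,
            restoreRel₂_deleteStructure] }
  exact StrongHomClass.realize_sentence e φ

end delete

section translate

variable {n : ℕ}

def varIdx : (pifLang u d).Term (Empty ⊕ Fin n) → Fin n
  | .var (.inr k) => k
  | .var (.inl e) => e.elim
  | .func f _ => Empty.elim f

theorem realize_varIdx {N : Type} [(pifLang u d).Structure N]
    (t : (pifLang u d).Term (Empty ⊕ Fin n)) (v : Empty → N) (xs : Fin n → N) :
    t.realize (Sum.elim v xs) = xs (varIdx t) := by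
  match t with
  | .var (.inr k) => rfl
  | .var (.inl e) => exact e.elim
  | .func f _ => exact Empty.elim f

def unaryAtom (j : Fin (delUnary u d)) (k : Fin n) :
    (pifLang (delUnary u d) d).BoundedFormula Empty n :=
  Relations.boundedFormula₁ (L := pifLang (delUnary u d) d) j &k

def pointAtom (j : Fin (delUnary u d)) : (pifLang (delUnary u d) d).BoundedFormula Empty n :=
  (unaryAtom j (Fin.last n)).ex

def binaryAtom (i : Fin d) (k k' : Fin n) : (pifLang (delUnary u d) d).BoundedFormula Empty n :=
  (pifRel _ d i).boundedFormula₂ &k &k'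

-- `T k` records whether the variable `k` denotes the deleted point.
def translateEq (T : Fin n → Bool) (k k' : Fin n) :
    (pifLang (delUnary u d) d).BoundedFormula Empty n :=
  match T k, T k' with
  | true, true => ⊤
  | false, false => (&k).bdEqual &k'
  | _, _ => ⊥

def translateRel (T : Fin n → Bool) : ∀ {l}, (pifLang u d).Relations l → (Fin l → Fin n) →
    (pifLang (delUnary u d) d).BoundedFormula Empty n
  | 1, j, ks => if T (ks 0) then pointAtom (atPoint j) else unaryAtom (oldRel j) (ks 0)
  | 2, i, ks =>
    match T (ks 0), T (ks 1) with
    | true, true => pointAtom (loopAtPoint i)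
    | true, false => unaryAtom (fromPoint i) (ks 1)
    | false, true => unaryAtom (toPoint i) (ks 0)
    | false, false => binaryAtom i (ks 0) (ks 1)
  | 0, R, _ | _ + 3, R, _ => Empty.elim R

def translate : ∀ {n}, (pifLang u d).BoundedFormula Empty n → (Fin n → Bool) →
    (pifLang (delUnary u d) d).BoundedFormula Empty n
  | _, .falsum, _ => ⊥
  | _, .equal t₁ t₂, T => translateEq T (varIdx t₁) (varIdx t₂)
  | _, .rel R ts, T => translateRel T R (fun i => varIdx (ts i))
  | _, .imp φ ψ, T => (translate φ T).imp (translate ψ T)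
  | _, .all φ, T => (translate φ (Fin.snoc T false)).all ⊓ (translate φ (Fin.snoc T true)).all

def mark (T : Fin n → Bool) (v : Fin n → M) (k : Fin n) : Option M :=
  if T k then none else some (v k)

theorem mark_snoc_false (T : Fin n → Bool) (v : Fin n → M) (x : M) :
    mark (Fin.snoc T false) (Fin.snoc v x) = Fin.snoc (mark T v) (some x) := by
  funext k
  refine Fin.lastCases ?_ (fun k => ?_) k <;> simp [mark]

theorem mark_snoc_true (T : Fin n → Bool) (v : Fin n → M) (x : M) :
    mark (Fin.snoc T true) (Fin.snoc v x) = Fin.snoc (mark T v) none := by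
  funext k
  refine Fin.lastCases ?_ (fun k => ?_) k <;> simp [mark]

variable (St : (pifLang (delUnary u d) d).Structure M)

theorem realize_unaryAtom (j : Fin (delUnary u d)) (k : Fin n) (v : Fin n → M) :
    @BoundedFormula.Realize _ M St _ _ (unaryAtom j k) default v ↔
      St.RelMap (n := 1) j ![v k] := by
  let _ := St
  exact BoundedFormula.realize_rel₁

theorem realize_pointAtom (j : Fin (delUnary u d)) (v : Fin n → M) :
    @BoundedFormula.Realize _ M St _ _ (pointAtom j) default v ↔
      ∃ z, St.RelMap (n := 1) j ![z] := by
  let _ := St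
  exact BoundedFormula.realize_ex.trans (exists_congr fun z =>
    (realize_unaryAtom St j _ _).trans (by rw [Fin.snoc_last]))

theorem realize_binaryAtom (i : Fin d) (k k' : Fin n) (v : Fin n → M) :
    @BoundedFormula.Realize _ M St _ _ (binaryAtom i k k') default v ↔
      St.RelMap (pifRel _ d i) ![v k, v k'] := by
  let _ := St
  exact BoundedFormula.realize_rel₂

theorem realize_translateEq (T : Fin n → Bool) (k k' : Fin n) (v : Fin n → M) :
    @BoundedFormula.Realize _ M St _ _ (translateEq T k k') default v ↔
      mark T v k = mark T v k' := by
  let _ := St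
  unfold translateEq mark
  cases T k <;> cases T k' <;> simp

theorem realize_translateRel (T : Fin n → Bool) {l : ℕ} (R : (pifLang u d).Relations l)
    (ks : Fin l → Fin n) (v : Fin n → M) :
    @BoundedFormula.Realize _ M St _ _ (translateRel T R ks) default v ↔
      (restoreStructure St).RelMap R (fun i => mark T v (ks i)) := by
  match l, R with
  | 0, R | _ + 3, R => exact Empty.elim R
  | 1, j =>
    rw [restoreStructure_relMap₁]
    unfold translateRel mark
    cases h : T (ks 0) <;> simp only [h, if_true, if_false, Bool.false_eq_true]
    · exact realize_unaryAtom St (oldRel j) _ v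
    · exact realize_pointAtom St (atPoint j) v
  | 2, i =>
    rw [restoreStructure_relMap₂]
    unfold translateRel mark
    cases h₀ : T (ks 0) <;> cases h₁ : T (ks 1) <;>
      simp only [h₀, h₁, if_true, if_false, Bool.false_eq_true]
    · exact realize_binaryAtom St i _ _ v
    · exact realize_unaryAtom St (toPoint i) _ v
    · exact realize_unaryAtom St (fromPoint i) _ v
    · exact realize_pointAtom St (loopAtPoint i) v

-- On empty `M` the conjunct of `translate (.all φ)` for the deleted point holds vacuously.
theorem realize_translate [Nonempty M] (φ : (pifLang u d).BoundedFormula Empty n)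
    (T : Fin n → Bool) (v : Fin n → M) :
    @BoundedFormula.Realize _ M St _ _ (translate φ T) default v ↔
      @BoundedFormula.Realize _ _ (restoreStructure St) _ _ φ default (mark T v) := by
  let _ := St
  let _ := restoreStructure St
  induction φ with
  | falsum => exact Iff.rfl
  | equal t₁ t₂ =>
    simp only [translate, realize_translateEq, BoundedFormula.Realize, realize_varIdx]
  | rel R ts =>
    simp only [translate, realize_translateRel, BoundedFormula.Realize, realize_varIdx]
  | imp φ ψ ihφ ihψ =>
    simp only [translate, BoundedFormula.realize_imp, ihφ, ihψ]
  | all φ ih =>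
    simp only [translate, BoundedFormula.realize_inf, BoundedFormula.realize_all, ih,
      mark_snoc_false, mark_snoc_true, Option.forall, forall_const]
    exact and_comm

end translate

def deletion (φ : (pifLang u d).Sentence) : (pifLang (delUnary u d) d).Sentence :=
  translate φ default ⊓ Sentence.cardGe _ 1

theorem realize_deletion (St : (pifLang (delUnary u d) d).Structure M)
    (φ : (pifLang u d).Sentence) :
    @Sentence.Realize _ M St (deletion φ) ↔
      Nonempty M ∧ @Sentence.Realize _ _ (restoreStructure St) φ := by
  let _ := St
  let _ := restoreStructure St
  rw [deletion, Sentence.realize_inf, Sentence.realize_cardGe_one, and_comm]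
  refine and_congr_right fun _ => ?_
  rw [Sentence.Realize, Formula.Realize, realize_translate, Sentence.Realize, Formula.Realize]
  congr!

end PIFDeletion

open PIFDeletion in
theorem PIFSpec.shift_diff_zero {d : ℕ} {S : Set ℕ} (h : PIFSpec d S) :
    PIFSpec d ({x | x + 1 ∈ S} \ {0}) := by
  obtain ⟨u, φ, hφ, rfl⟩ := h
  refine ⟨delUnary u d, deletion φ, fun M St hM => ?_, ?_⟩
  · exact (hφ _ _ ((realize_deletion St φ).mp hM).2).of_restoreStructure
  ext N
  constructor
  · rintro ⟨⟨M', St, hfin, hcard, hpif, hM'⟩, hN⟩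
    obtain ⟨a⟩ : Nonempty M' := (Nat.card_pos_iff.mp (by omega)).1
    classical
    have hcard' : Nat.card {y // y ≠ a} = N := by
      have := Nat.card_congr (Equiv.optionSubtypeNe a)
      rw [Finite.card_option, hcard] at this
      omega
    have : Nonempty {y // y ≠ a} := (Nat.card_pos_iff.mp (hcard' ▸ Nat.pos_of_ne_zero hN)).1
    exact ⟨_, deleteStructure St a, inferInstance, hcard', hpif.deleteStructure a,
      (realize_deletion _ φ).mpr ⟨this, (realize_restoreStructure_deleteStructure St a φ).mpr hM'⟩⟩
  · rintro ⟨M, St, hfin, rfl, -, hM⟩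
    obtain ⟨hne, hM⟩ := (realize_deletion St φ).mp hM
    exact ⟨⟨Option M, restoreStructure St, inferInstance, Finite.card_option, hφ _ _ hM, hM⟩,
      Nat.card_pos.ne'⟩

/-- if S ∈ PIFSpec_d then {x : x + 1 ∈ S} ∈ PIFSpec_d. -/
theorem stmt_9 (d : ℕ) (S : Set ℕ) (hS : PIFSpec d S) :
    PIFSpec d {x : ℕ | x + 1 ∈ S} := by
  by_cases h1 : 1 ∈ S
  · convert hS.shift_diff_zero.insert_zero using 1
    ext (_ | _) <;> simp [h1]
  · convert hS.shift_diff_zero using 1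
    ext (_ | _) <;> simp [h1]
end

section
/- If S ∈ PIFSpec_d, then for any fixed l ≥ 0 the set {2dn + l : n ∈ S} is in BDSpec_3: it is the spectrum of a first-order sentence in a vocabulary with one binary relation E and unary relations, all of whose models interpret E as a symmetric relation of maximum degree at most 3. The construction replaces each element a of a model by a path gadget of 2d vertices p₁(a),…,p_d(a),q₁(a),…,q_d(a), with an extra edge from p_i(a) to q_i(a') whenever f_i(a) = a', plus l isolated vertices; the resulting graph has maximum degree 3. -/
open FirstOrder

/-- The vocabulary with u unary relation symbols and one binary relation E. -/
def graphLang (u : ℕ) : Language where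
  Functions := fun _ => Empty
  Relations := fun n => match n with
    | 1 => Fin u
    | 2 => Unit
    | _ => Empty

/-- The binary relation symbol E of `graphLang u`. -/
def graphE (u : ℕ) : (graphLang u).Relations 2 := ()

/-- E is interpreted as a symmetric relation of maximum degree at most 3. -/
def SymDeg3 {u : ℕ} {M : Type} (St : (graphLang u).Structure M) : Prop :=
  (∀ a b : M, St.RelMap (graphE u) ![a, b] → St.RelMap (graphE u) ![b, a]) ∧
  (∀ v : M, {w : M | w ≠ v ∧ St.RelMap (graphE u) ![v, w]}.Finite ∧
    Set.ncard {w : M | w ≠ v ∧ St.RelMap (graphE u) ![v, w]} ≤ 3)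

/-- The spectrum of a sentence of `graphLang u`. -/
def graphSpectrum {u : ℕ} (φ : (graphLang u).Sentence) : Set ℕ :=
  {N | ∃ (M : Type) (St : (graphLang u).Structure M),
    Finite M ∧ Nat.card M = N ∧
    @FirstOrder.Language.Sentence.Realize (graphLang u) M St φ}

/-- S ∈ BDSpec_3: S is the spectrum of a sentence in a vocabulary with one
binary relation E and unary relations, all of whose models interpret E as a
symmetric relation of maximum degree at most 3. -/
def BDSpec3 (S : Set ℕ) : Prop :=
  ∃ (u : ℕ) (φ : (graphLang u).Sentence),
    (∀ (M : Type) (St : (graphLang u).Structure M),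
      @FirstOrder.Language.Sentence.Realize (graphLang u) M St φ → SymDeg3 St) ∧
    S = graphSpectrum φ

/-!
A finite model `M` of `φ`, where `f₁, …, f_d` are partial injections, is encoded as a graph on
`2d·|M| + l` vertices. Each `a ∈ M` becomes a path `(a, 0) — (a, 1) — ⋯ — (a, 2d - 1)`, whose
positions `i` and `d + i` play the roles of `pᵢ(a)` and `qᵢ(a)`. A cross edge `(a, i) — (b, d + i)`
is added whenever `fᵢ(a) = b ≠ a`, and `l` isolated vertices are added. Since the `fᵢ` are
partial injections, a vertex carries at most one cross edge, so every degree is at most 3.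

Unary predicates record the position of each vertex and the fixed points `fᵢ(a) = a`. They also
give each gadget its colour in a proper `(2d+1)`-colouring of the graph formed by the `fᵢ` (in that
graph every element has at most `2d` neighbours). So the path edges are exactly the edges between
vertices of the same colour at consecutive positions. This makes the gadgets, the `fᵢ`, and hence
`φ` relativised to the position-0 vertices, first-order definable. In any finite model of the
resulting sentence, consecutive position classes are in bijection. This forces the size to be
`2d·n + l`, where `n` is the size of the interpreted model of `φ`. For `d = 0` the set is `∅`
or `{l}`.
-/

theorem Set.encard_le_card_of_subset_iUnion_subsingleton {α ι : Type*} [Fintype ι] {s : Set α}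
    {t : ι → Set α} (hs : s ⊆ ⋃ i, t i) (ht : ∀ i, (t i).Subsingleton) :
    s.encard ≤ Fintype.card ι :=
  calc s.encard ≤ (⋃ i, t i).encard := Set.encard_le_encard hs
    _ ≤ ∑ i, (t i).encard := Set.encard_iUnion_le_of_fintype t
    _ ≤ ∑ _i : ι, (1 : ℕ∞) :=
      Finset.sum_le_sum fun i _ => Set.encard_le_one_iff_subsingleton.2 (ht i)
    _ = Fintype.card ι := by simp

theorem Set.natCast_le_encard_iff {α : Type*} {s : Set α} {k : ℕ} :
    (k : ℕ∞) ≤ s.encard ↔ ∃ w : Fin k → α, Function.Injective w ∧ ∀ i, w i ∈ s := by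
  constructor
  · intro hk
    obtain ⟨t, hts, htk⟩ := Set.exists_subset_encard_eq hk
    have := (Set.finite_of_encard_eq_coe htk).to_subtype
    have hcard : Nat.card t = k := by
      rw [Nat.card_coe_set_eq, Set.ncard_def, htk, ENat.toNat_natCast]
    let e := (Finite.equivFinOfCardEq hcard).symm
    exact ⟨fun i => e i, Subtype.val_injective.comp e.injective, fun i => hts (e i).2⟩
  · rintro ⟨w, hw, hws⟩
    calc (k : ℕ∞) = ENat.card (Fin k) := by simp
      _ ≤ (Set.range w).encard := hw.encard_range
      _ ≤ s.encard := Set.encard_le_encard (Set.range_subset_iff.2 hws)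

theorem SimpleGraph.colorable_of_encard_neighborSet_lt {V : Type*} [Finite V]
    (G : SimpleGraph V) {k : ℕ} (h : ∀ v, (G.neighborSet v).encard < k) : G.Colorable k := by
  classical
  have : Fintype V := Fintype.ofFinite V
  suffices ∀ s : Finset V, ∃ c : V → Fin k, ∀ v ∈ s, ∀ w ∈ s, G.Adj v w → c v ≠ c w by
    obtain ⟨c, hc⟩ := this Finset.univ
    exact ⟨Coloring.mk c fun {v w} hvw => hc v (Finset.mem_univ _) w (Finset.mem_univ _) hvw⟩
  intro s
  induction s using Finset.induction_on with
  | empty =>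
    exact ⟨fun v => ⟨0, Nat.pos_of_ne_zero (by rintro rfl; simpa using h v)⟩, by simp⟩
  | insert a s ha ih =>
    obtain ⟨c, hc⟩ := ih
    obtain ⟨col, hcol⟩ : ∃ col, col ∉ c '' G.neighborSet a := by
      by_contra! hall
      have := (Set.encard_image_le c _).trans_lt (h a)
      rw [Set.eq_univ_of_forall hall, Set.encard_univ] at this
      simp at this
    refine ⟨Function.update c a col, fun v hv w hw hvw => ?_⟩
    rcases Finset.mem_insert.1 hv with rfl | hv <;> rcases Finset.mem_insert.1 hw with rfl | hw
    · exact absurd rfl hvw.ne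
    · rw [Function.update_self, Function.update_of_ne hvw.ne.symm]
      exact fun h => hcol ⟨w, hvw, h.symm⟩
    · rw [Function.update_self, Function.update_of_ne hvw.ne]
      exact fun h => hcol ⟨v, hvw.symm, h⟩
    · rw [Function.update_of_ne (ne_of_mem_of_not_mem hv ha),
        Function.update_of_ne (ne_of_mem_of_not_mem hw ha)]
      exact hc v hv w hw hvw

theorem Nat.card_eq_of_forall_existsUnique {α β : Type*} {R : α → β → Prop}
    (h₁ : ∀ a, ∃! b, R a b) (h₂ : ∀ b, ∃! a, R a b) : Nat.card α = Nat.card β := by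
  choose f hf hf' using h₁
  refine Nat.card_congr (Equiv.ofBijective f ⟨fun a a' haa' => ?_, fun b => ?_⟩)
  · exact (h₂ (f a)).unique (hf a) (haa' ▸ hf a')
  · obtain ⟨a, ha, -⟩ := h₂ b
    exact ⟨a, (hf' a b ha).symm⟩

theorem Nat.card_eq_sum_card_of_existsUnique {ι α : Type*} [Fintype ι] [Finite α]
    {P : ι → α → Prop} (h : ∀ x, ∃! i, P i x) : Nat.card α = ∑ i, Nat.card {x | P i x} := by
  choose f hf hf' using h
  have hP (i : ι) (x : α) : P i x ↔ f x = i :=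
    ⟨fun hx => (hf' x i hx).symm, fun hx => hx ▸ hf x⟩
  rw [← Nat.card_congr (Equiv.sigmaFiberEquiv f), Nat.card_sigma]
  exact Finset.sum_congr rfl fun i _ =>
    Nat.card_congr (Equiv.subtypeEquivRight fun x => (hP i x).symm)

namespace FirstOrder.Language

variable {L L' : Language} {α : Type*} {M N : Type*}

section Interpretation

variable [L.IsRelational]

def Term.toVar : L.Term α → α
  | var a => a
  | func f _ => isEmptyElim f

theorem Term.realize_eq_toVar [L.Structure M] (t : L.Term α) (v : α → M) :
    t.realize v = v t.toVar := by
  cases t with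
  | var a => rfl
  | func f _ => exact isEmptyElim f

variable (dom : L'.Formula (Fin 1)) (rel : ∀ {k}, L.Relations k → L'.Formula (Fin k))

def BoundedFormula.interpret : ∀ {n}, L.BoundedFormula α n → L'.BoundedFormula α n
  | _, falsum => falsum
  | _, equal t₁ t₂ => equal (var t₁.toVar) (var t₂.toVar)
  | _, BoundedFormula.rel R ts => BoundedFormula.relabel (fun i => (ts i).toVar) (rel R)
  | _, imp φ ψ => (interpret φ).imp (interpret ψ)
  | n, all φ =>
    ((BoundedFormula.relabel (fun _ => Sum.inr (Fin.last n)) dom).imp (interpret φ)).all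

variable {dom rel} [L'.Structure N]

variable (rel) in
abbrev inducedStructure (S : Set N) : L.Structure S where
  funMap f := isEmptyElim f
  RelMap R xs := (rel R).Realize (Subtype.val ∘ xs)

variable [L.Structure M] (e : M → N) (he : Function.Injective e)
  (hdom : ∀ y, dom.Realize (fun _ => y) ↔ y ∈ Set.range e)
  (hrel : ∀ {k} (R : L.Relations k) (xs : Fin k → M),
    (rel R).Realize (e ∘ xs) ↔ Structure.RelMap R xs)
include he hdom hrel

theorem BoundedFormula.realize_interpret {n} (φ : L.BoundedFormula α n) (v : α → M)
    (xs : Fin n → M) :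
    (BoundedFormula.interpret dom rel φ).Realize (e ∘ v) (e ∘ xs) ↔ φ.Realize v xs := by
  induction φ with
  | falsum => rfl
  | equal t₁ t₂ =>
    simp [interpret, BoundedFormula.Realize, Term.realize_eq_toVar, ← Sum.comp_elim, he.eq_iff]
  | rel R ts =>
    have hv : (Sum.elim (e ∘ v) ((e ∘ xs) ∘ Fin.castAdd 0) ∘ fun i => (ts i).toVar) =
        e ∘ fun i => (ts i).realize (Sum.elim v xs) := by
      funext i
      rw [Function.comp_apply, Function.comp_apply, Term.realize_eq_toVar]
      cases (ts i).toVar <;> rfl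
    rw [interpret, realize_relabel, hv]
    exact (iff_of_eq (congrArg _ (Subsingleton.elim _ _))).trans (hrel R _)
  | imp φ ψ ihφ ihψ => simp [interpret, ihφ, ihψ]
  | all φ ih =>
    have hdom' (a : N) (xs' : Fin 0 → N) :
        BoundedFormula.Realize dom (fun _ => a) xs' ↔ a ∈ Set.range e :=
      (iff_of_eq (congrArg _ (Subsingleton.elim _ _))).trans (hdom a)
    have hlast (a : N) : (Sum.elim (e ∘ v) (Fin.snoc (e ∘ xs) a ∘ Fin.castAdd 0) ∘
        fun _ : Fin 1 => Sum.inr (Fin.last _)) = fun _ => a := by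
      funext
      simp
    simp only [interpret, realize_all, realize_imp, realize_relabel, hlast, hdom',
      Set.forall_mem_range, ← Fin.comp_snoc, ih]

theorem Sentence.realize_interpret (φ : L.Sentence) :
    N ⊨ BoundedFormula.interpret dom rel φ ↔ M ⊨ φ := by
  have := BoundedFormula.realize_interpret e he hdom hrel φ default default
  rwa [Subsingleton.elim (e ∘ default) default, Subsingleton.elim (e ∘ default) default] at this

omit [L.Structure M]
omit he hdom hrel in
theorem Sentence.realize_interpret_iff (φ : L.Sentence) :
    N ⊨ BoundedFormula.interpret dom rel φ ↔
      @Sentence.Realize L {y : N | dom.Realize fun _ => y} (inducedStructure rel _) φ :=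
  letI := inducedStructure rel {y : N | dom.Realize fun _ => y}
  realize_interpret Subtype.val Subtype.val_injective (by simp) (fun _ _ => Iff.rfl) φ

end Interpretation

namespace Formula

noncomputable def all₁ (φ : L.Formula (α ⊕ Unit)) : L.Formula α := iAlls Unit φ

noncomputable def exUnique₁ (φ : L.Formula (α ⊕ Unit)) : L.Formula α := iExsUnique Unit φ

noncomputable def existsDistinct (k : ℕ) (φ : L.Formula (α ⊕ Unit)) : L.Formula α :=
  iExs (Fin k) ((iInf fun p : {p : Fin k × Fin k // p.1 ≠ p.2} =>
      ∼((var (Sum.inr p.1.1)).equal (var (Sum.inr p.1.2)))) ⊓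
    iInf fun i => φ.relabel (Sum.map id fun _ => i))

noncomputable def existsExactly (k : ℕ) (φ : L.Formula (α ⊕ Unit)) : L.Formula α :=
  existsDistinct k φ ⊓ (existsDistinct (k + 1) φ).not

variable [L.Structure M] {φ : L.Formula (α ⊕ Unit)} {v : α → M}

@[simp] theorem realize_all₁ : (all₁ φ).Realize v ↔ ∀ y, φ.Realize (Sum.elim v fun _ => y) := by
  simp only [all₁, realize_iAlls]
  exact ⟨fun h y => h _, fun h i => h (i ())⟩

@[simp] theorem realize_exUnique₁ :
    (exUnique₁ φ).Realize v ↔ ∃! y, φ.Realize (Sum.elim v fun _ => y) := by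
  rw [exUnique₁, realize_iExsUnique]
  exact (Equiv.funUnique Unit M).existsUnique_congr fun _ => Iff.rfl

@[simp] theorem realize_existsDistinct {k : ℕ} : (existsDistinct k φ).Realize v ↔
    (k : ℕ∞) ≤ {y | φ.Realize (Sum.elim v fun _ => y)}.encard := by
  rw [Set.natCast_le_encard_iff]
  simp only [existsDistinct, realize_iExs, realize_inf, realize_iInf, realize_not,
    realize_relabel, Sum.elim_comp_map, Function.comp_id]
  refine exists_congr fun w => and_congr ?_ Iff.rfl
  simp only [Formula.Realize, Term.equal, Subtype.forall, Prod.forall,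
    BoundedFormula.realize_bdEqual, Term.realize_relabel, Term.realize_var, Function.comp_apply]
  exact ⟨fun h a b hab => by_contra fun hne => h a b hne hab, fun h a b hne hab => hne (h hab)⟩

@[simp] theorem realize_existsExactly {k : ℕ} : (existsExactly k φ).Realize v ↔
    {y | φ.Realize (Sum.elim v fun _ => y)}.encard = k := by
  rw [existsExactly, realize_inf, realize_not, realize_existsDistinct, realize_existsDistinct,
    not_le, Nat.cast_add, Nat.cast_one, ENat.lt_add_one_iff (ENat.natCast_ne_top k),
    le_antisymm_iff, and_comm]

end Formula

end FirstOrder.Language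

open Language

abbrev graphStructure {U : ℕ} {V : Type} (P : Fin U → V → Prop) (E : V → V → Prop) :
    (graphLang U).Structure V where
  funMap f := Empty.elim f
  RelMap := fun {n} => match n with
    | 1 => fun r xs => P r (xs 0)
    | 2 => fun _ xs => E (xs 0) (xs 1)
    | 0 => fun r => Empty.elim r
    | _ + 3 => fun r => Empty.elim r

namespace GadgetGraph

/-- Position `t` of a gadget path is `label (some t)`, with `pᵢ = Fin.castAdd d i` and
`qᵢ = Fin.natAdd d i`; the isolated vertices carry `label none`. `loop i` marks `fᵢ(a) = a`,
which cannot be drawn as an edge: for `d = 1` the edge `p₁(a) — q₁(a)` is a path edge. -/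
inductive GadgetPred (u d : ℕ)
  | rel (j : Fin u)
  | loop (i : Fin d)
  | label (t : Option (Fin (d + d)))
  | color (c : Fin (d + d + 1))
  deriving DecidableEq, Fintype

abbrev gadgetLang (u d : ℕ) : Language := graphLang (Fintype.card (GadgetPred u d))

variable {u d : ℕ}

def p₀ [NeZero d] : Fin (d + d) := Fin.castAdd d 0

noncomputable def GadgetPred.symbol (p : GadgetPred u d) : (gadgetLang u d).Relations 1 :=
  Fintype.equivFin _ p

open GadgetPred

section Semantics

variable (u d) {N : Type} [(gadgetLang u d).Structure N]

def Holds (p : GadgetPred u d) (x : N) : Prop := Structure.RelMap p.symbol ![x]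

def Edge (x y : N) : Prop := Structure.RelMap (graphE (Fintype.card (GadgetPred u d))) ![x, y]

def SameColor (x y : N) : Prop := ∃ c, Holds u d (color c) x ∧ Holds u d (color c) y

def Step (s t : Fin (d + d)) (x y : N) : Prop :=
  Holds u d (label (some s)) x ∧ Holds u d (label (some t)) y ∧ Edge u d x y ∧ SameColor u d x y

def IsGadget (g : Fin (d + d) → N) : Prop :=
  ∀ s t : Fin (d + d), t.val = s.val + 1 → Step u d s t (g s) (g t)

variable [NeZero d]

def IsAt (t : Fin (d + d)) (x y : N) : Prop := ∃ g, IsGadget u d g ∧ g p₀ = x ∧ g t = y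

def Linked (i : Fin d) (x y : N) : Prop :=
  (x = y ∧ Holds u d (loop i) x) ∨
    (x ≠ y ∧ ∃ x' y', IsAt u d (Fin.castAdd d i) x x' ∧ IsAt u d (Fin.natAdd d i) y y' ∧
      Edge u d x' y')

end Semantics

section Formulas

variable {α : Type}

noncomputable def holdsF (p : GadgetPred u d) (x : α) : (gadgetLang u d).Formula α :=
  p.symbol.formula₁ (var x)

variable (u d)

noncomputable def edgeF (x y : α) : (gadgetLang u d).Formula α :=
  (graphE (Fintype.card (GadgetPred u d))).formula₂ (var x) (var y)

noncomputable def sameColorF (x y : α) : (gadgetLang u d).Formula α :=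
  Formula.iSup fun c => holdsF (color c) x ⊓ holdsF (color c) y

noncomputable def stepF (s t : Fin (d + d)) (x y : α) : (gadgetLang u d).Formula α :=
  holdsF (label (some s)) x ⊓ holdsF (label (some t)) y ⊓ edgeF u d x y ⊓ sameColorF u d x y

noncomputable def gadgetF : (gadgetLang u d).Formula (Fin (d + d)) :=
  Formula.iInf fun p : {p : Fin (d + d) × Fin (d + d) // p.2.val = p.1.val + 1} =>
    stepF u d p.1.1 p.1.2 p.1.1 p.1.2

noncomputable def atF [NeZero d] (t : Fin (d + d)) (x y : α) : (gadgetLang u d).Formula α :=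
  Formula.iExs (Fin (d + d)) ((gadgetF u d).relabel Sum.inr ⊓
    (var (Sum.inr p₀)).equal (var (Sum.inl x)) ⊓ (var (Sum.inr t)).equal (var (Sum.inl y)))

noncomputable def linkF [NeZero d] (i : Fin d) : (gadgetLang u d).Formula (Fin 2) :=
  ((var 0).equal (var 1) ⊓ holdsF (loop i) 0) ⊔
    (((var 0).equal (var 1)).not ⊓ Formula.iExs (Fin 2)
      (atF u d (Fin.castAdd d i) (Sum.inl 0) (Sum.inr 0) ⊓
        atF u d (Fin.natAdd d i) (Sum.inl 1) (Sum.inr 1) ⊓ edgeF u d (Sum.inr 0) (Sum.inr 1)))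

variable {u d} {N : Type} [(gadgetLang u d).Structure N] {v : α → N}

@[simp] theorem realize_holdsF {p : GadgetPred u d} {x : α} :
    (holdsF p x).Realize v ↔ Holds u d p (v x) := by
  simp [holdsF, Holds]

@[simp] theorem realize_edgeF {x y : α} : (edgeF u d x y).Realize v ↔ Edge u d (v x) (v y) := by
  simp [edgeF, Edge]

@[simp] theorem realize_sameColorF {x y : α} :
    (sameColorF u d x y).Realize v ↔ SameColor u d (v x) (v y) := by
  simp [sameColorF, SameColor]

@[simp] theorem realize_stepF {s t : Fin (d + d)} {x y : α} :
    (stepF u d s t x y).Realize v ↔ Step u d s t (v x) (v y) := by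
  simp [stepF, Step, and_assoc]

@[simp] theorem realize_gadgetF {g : Fin (d + d) → N} :
    (gadgetF u d).Realize g ↔ IsGadget u d g := by
  simp [gadgetF, IsGadget]

variable [NeZero d]

@[simp] theorem realize_atF {t : Fin (d + d)} {x y : α} :
    (atF u d t x y).Realize v ↔ IsAt u d t (v x) (v y) := by
  simp [atF, IsAt, Function.comp_def, and_assoc]

@[simp] theorem realize_linkF {i : Fin d} {v : Fin 2 → N} :
    (linkF u d i).Realize v ↔ Linked u d i (v 0) (v 1) := by
  simp [linkF, Linked, Fin.exists_fin_succ_pi, and_assoc]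

end Formulas

section Axioms

local notation "x₀" => (Sum.inr () : Empty ⊕ Unit)
local notation "x₁" => (Sum.inl (Sum.inr ()) : (Empty ⊕ Unit) ⊕ Unit)
local notation "y₁" => (Sum.inr () : (Empty ⊕ Unit) ⊕ Unit)

variable (u d)

noncomputable def labelAxiom : (gadgetLang u d).Sentence :=
  Formula.all₁ <| Formula.iSup fun o => holdsF (label o) x₀ ⊓
    Formula.iInf fun o' : {o' // o' ≠ o} => (holdsF (label o'.1) x₀).not

noncomputable def isolatedAxiom (l : ℕ) : (gadgetLang u d).Sentence :=
  Formula.existsExactly l (holdsF (label none) x₀)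

noncomputable def stepAxiom : (gadgetLang u d).Sentence :=
  Formula.iInf fun p : {p : Fin (d + d) × Fin (d + d) // p.2.val = p.1.val + 1} =>
    Formula.all₁ (holdsF (label (some p.1.1)) x₀ ⟹
      Formula.exUnique₁ (stepF u d p.1.1 p.1.2 x₁ y₁)) ⊓
    Formula.all₁ (holdsF (label (some p.1.2)) x₀ ⟹
      Formula.exUnique₁ (stepF u d p.1.1 p.1.2 y₁ x₁))

noncomputable def degreeAxiom : (gadgetLang u d).Sentence :=
  Formula.all₁ (Formula.existsDistinct 4
    (((var y₁).equal (var x₁)).not ⊓ edgeF u d x₁ y₁)).not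

variable {u d} {N : Type} [(gadgetLang u d).Structure N]

theorem realize_labelAxiom : N ⊨ labelAxiom u d ↔ ∀ x : N, ∃! o, Holds u d (label o) x := by
  simp only [Sentence.Realize, labelAxiom, Formula.realize_all₁, Formula.realize_iSup,
    Formula.realize_inf, Formula.realize_iInf, Formula.realize_not, realize_holdsF, Sum.elim_inr]
  refine forall_congr' fun x => exists_congr fun o => and_congr_right fun _ => ?_
  exact ⟨fun h o' ho' => by_contra fun hne => h ⟨o', hne⟩ ho', fun h o' ho' => o'.2 (h _ ho')⟩

theorem realize_isolatedAxiom {l : ℕ} :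
    N ⊨ isolatedAxiom u d l ↔ {x : N | Holds u d (label none) x}.encard = l := by
  simp [Sentence.Realize, isolatedAxiom]

theorem realize_stepAxiom : N ⊨ stepAxiom u d ↔ ∀ s t : Fin (d + d), t.val = s.val + 1 →
    (∀ x : N, Holds u d (label (some s)) x → ∃! y, Step u d s t x y) ∧
    (∀ y : N, Holds u d (label (some t)) y → ∃! x, Step u d s t x y) := by
  simp [Sentence.Realize, stepAxiom]

theorem realize_degreeAxiom : N ⊨ degreeAxiom u d ↔
    ∀ x : N, {y | y ≠ x ∧ Edge u d x y}.encard ≤ 3 := by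
  simp only [Sentence.Realize, degreeAxiom, Formula.realize_all₁, Formula.realize_not,
    Formula.realize_existsDistinct, Formula.realize_inf, realize_edgeF]
  simp only [Formula.Realize, Term.equal, Term.relabel, BoundedFormula.realize_bdEqual,
    Term.realize_var, Sum.elim_inl, Sum.elim_inr, not_le, ne_eq, Nat.cast_ofNat]
  refine forall_congr' fun x => ?_
  rw [show (4 : ℕ∞) = 3 + 1 by norm_num, ENat.lt_add_one_iff (by simp)]

end Axioms

section Sentence

instance : (pifLang u d).IsRelational := fun _ => (inferInstance : IsEmpty Empty)

variable [NeZero d]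

variable (u d)

noncomputable def linkRel : ∀ {k}, (pifLang u d).Relations k → (gadgetLang u d).Formula (Fin k)
  | 1, j => holdsF (rel j) 0
  | 2, i => linkF u d i
  | 0, r => Empty.elim r
  | _ + 3, r => Empty.elim r

noncomputable def gadgetSentence (l : ℕ) (φ : (pifLang u d).Sentence) :
    (gadgetLang u d).Sentence :=
  labelAxiom u d ⊓ isolatedAxiom u d l ⊓ (graphE (Fintype.card (GadgetPred u d))).symmetric ⊓
    stepAxiom u d ⊓ degreeAxiom u d ⊓
    BoundedFormula.interpret (holdsF (label (some p₀)) 0) (linkRel u d) φ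

variable {u d} {N : Type} [(gadgetLang u d).Structure N] {l : ℕ} {φ : (pifLang u d).Sentence}

theorem realize_gadgetSentence : N ⊨ gadgetSentence u d l φ ↔
    N ⊨ labelAxiom u d ∧ N ⊨ isolatedAxiom u d l ∧
      N ⊨ (graphE (Fintype.card (GadgetPred u d))).symmetric ∧ N ⊨ stepAxiom u d ∧
      N ⊨ degreeAxiom u d ∧
      N ⊨ BoundedFormula.interpret (holdsF (label (some p₀)) 0) (linkRel u d) φ := by
  simp only [Sentence.Realize, gadgetSentence, Formula.realize_inf, and_assoc]

theorem symDeg3_of_realize_gadgetSentence (h : N ⊨ gadgetSentence u d l φ) :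
    SymDeg3 (inferInstance : (gadgetLang u d).Structure N) := by
  obtain ⟨-, -, hsymm, -, hdeg, -⟩ := realize_gadgetSentence.1 h
  rw [Relations.realize_symmetric] at hsymm
  rw [realize_degreeAxiom] at hdeg
  exact ⟨fun a b => hsymm.symm a b, fun v => Set.encard_le_coe_iff_finite_ncard_le.1 (hdeg v)⟩

theorem card_eq_of_realize_gadgetSentence [Finite N] (h : N ⊨ gadgetSentence u d l φ) :
    Nat.card N = 2 * d * Nat.card {x : N | Holds u d (label (some p₀)) x} + l := by
  obtain ⟨hlabel, hiso, -, hstep, -, -⟩ := realize_gadgetSentence.1 h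
  rw [realize_labelAxiom] at hlabel
  rw [realize_isolatedAxiom] at hiso
  rw [realize_stepAxiom] at hstep
  have hcons (s t : Fin (d + d)) (hst : t.val = s.val + 1) :
      Nat.card {x : N | Holds u d (label (some s)) x} =
        Nat.card {y : N | Holds u d (label (some t)) y} := by
    refine Nat.card_eq_of_forall_existsUnique (R := fun x y => Step u d s t x.1 y.1)
      (fun ⟨x, hx⟩ => ?_) (fun ⟨y, hy⟩ => ?_)
    · obtain ⟨y, hy, huniq⟩ := (hstep s t hst).1 x hx
      exact ⟨⟨y, hy.2.1⟩, hy, fun y' hy' => Subtype.ext (huniq y' hy')⟩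
    · obtain ⟨x, hx, huniq⟩ := (hstep s t hst).2 y hy
      exact ⟨⟨x, hx.1⟩, hx, fun x' hx' => Subtype.ext (huniq x' hx')⟩
  have hlayer (k : ℕ) (hk : k < d + d) :
      Nat.card {x : N | Holds u d (label (some ⟨k, hk⟩)) x} =
        Nat.card {x : N | Holds u d (label (some p₀)) x} := by
    induction k with
    | zero => rfl
    | succ k ih => exact (hcons ⟨k, by omega⟩ ⟨k + 1, hk⟩ rfl).symm.trans (ih _)
  have hnone : Nat.card {x : N | Holds u d (label none) x} = l := by
    rw [Nat.card_coe_set_eq, Set.ncard_def, hiso, ENat.toNat_natCast]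
  rw [Nat.card_eq_sum_card_of_existsUnique hlabel, Fintype.sum_option, hnone,
    Finset.sum_congr rfl fun t _ => hlayer t.val t.isLt, Finset.sum_const, Finset.card_univ,
    Fintype.card_fin, smul_eq_mul]
  ring

end Sentence

section IntendedModel

variable {M : Type} [(pifLang u d).Structure M]

def Arrow (u : ℕ) {d : ℕ} {M : Type} [(pifLang u d).Structure M] (i : Fin d) (a b : M) : Prop :=
  Structure.RelMap (pifRel u d i) ![a, b]

def conflictGraph (u d : ℕ) (M : Type) [(pifLang u d).Structure M] : SimpleGraph M :=
  SimpleGraph.fromRel fun a b => ∃ i : Fin d, Arrow u i a b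

theorem conflictGraph_adj {a b : M} : (conflictGraph u d M).Adj a b ↔
    a ≠ b ∧ ((∃ i : Fin d, Arrow u i a b) ∨ ∃ i : Fin d, Arrow u i b a) :=
  SimpleGraph.fromRel_adj (fun a b => ∃ i : Fin d, Arrow u i a b) a b

theorem conflictGraph_colorable [Finite M]
    (hpif : IsPIFStructure (inferInstance : (pifLang u d).Structure M)) :
    (conflictGraph u d M).Colorable (d + d + 1) := by
  refine SimpleGraph.colorable_of_encard_neighborSet_lt _ fun a => ?_
  have hcover : (conflictGraph u d M).neighborSet a ⊆ ⋃ j : Fin d ⊕ Fin d,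
      Sum.elim (fun i => {b | Arrow u i a b}) (fun i => {b | Arrow u i b a}) j := by
    intro b hb
    obtain ⟨-, ⟨i, h⟩ | ⟨i, h⟩⟩ := conflictGraph_adj.1 hb
    · exact Set.mem_iUnion.2 ⟨Sum.inl i, h⟩
    · exact Set.mem_iUnion.2 ⟨Sum.inr i, h⟩
  calc _ ≤ (Fintype.card (Fin d ⊕ Fin d) : ℕ∞) :=
        Set.encard_le_card_of_subset_iUnion_subsingleton hcover ?_
    _ < _ := by simpa using (Nat.cast_lt (α := ℕ∞)).2 (Nat.lt_succ_self (d + d))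
  rintro (i | i) b hb b' hb'
  · exact (hpif i).1 a b b' hb hb'
  · exact (hpif i).2 b b' a hb hb'

/-- Indexed by the colouring `C` so that the gadget structure on it can be an instance. -/
def GadgetVertex (_C : (conflictGraph u d M).Coloring (Fin (d + d + 1))) (l : ℕ) : Type :=
  M × Fin (d + d) ⊕ Fin l

def CrossEdge (u : ℕ) {d : ℕ} {M : Type} [(pifLang u d).Structure M]
    (x y : M × Fin (d + d)) : Prop :=
  x.1 ≠ y.1 ∧ ∃ i, x.2 = Fin.castAdd d i ∧ y.2 = Fin.natAdd d i ∧ Arrow u i x.1 y.1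

def gadgetAdj (u : ℕ) {d : ℕ} {M : Type} [(pifLang u d).Structure M] (l : ℕ) :
    M × Fin (d + d) ⊕ Fin l → M × Fin (d + d) ⊕ Fin l → Prop
  | .inl x, .inl y => (x.1 = y.1 ∧ (x.2.val + 1 = y.2.val ∨ y.2.val + 1 = x.2.val)) ∨
      CrossEdge u x y ∨ CrossEdge u y x
  | _, _ => False

def vertexPred {l : ℕ} (col : M → Fin (d + d + 1)) :
    GadgetPred u d → M × Fin (d + d) ⊕ Fin l → Prop
  | rel j, .inl (a, _) => Structure.RelMap (show (pifLang u d).Relations 1 from j) ![a]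
  | loop i, .inl (a, _) => Arrow u i a a
  | label o, .inl (_, t) => o = some t
  | label o, .inr _ => o = none
  | color c, .inl (a, _) => col a = c
  | _, _ => False

variable (C : (conflictGraph u d M).Coloring (Fin (d + d + 1))) (l : ℕ)

noncomputable instance : (gadgetLang u d).Structure (GadgetVertex C l) :=
  graphStructure (fun r => vertexPred C ((Fintype.equivFin _).symm r)) (gadgetAdj u l)

instance [Finite M] : Finite (GadgetVertex C l) :=
  inferInstanceAs (Finite (M × Fin (d + d) ⊕ Fin l))

theorem card_gadgetVertex [Finite M] : Nat.card (GadgetVertex C l) = 2 * d * Nat.card M + l := by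
  rw [GadgetVertex, Nat.card_sum, Nat.card_prod, Nat.card_eq_fintype_card (α := Fin (d + d)),
    Fintype.card_fin, Nat.card_eq_fintype_card (α := Fin l), Fintype.card_fin]
  ring

variable {C l}

def vtx (a : M) (t : Fin (d + d)) : GadgetVertex C l := .inl (a, t)

def iso (j : Fin l) : GadgetVertex C l := .inr j

theorem GadgetVertex.exists_eq (x : GadgetVertex C l) :
    (∃ a t, x = vtx a t) ∨ ∃ j, x = iso j := by
  rcases x with ⟨a, t⟩ | j
  exacts [Or.inl ⟨a, t, rfl⟩, Or.inr ⟨j, rfl⟩]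

@[simp] theorem vtx_inj {a b : M} {s t : Fin (d + d)} :
    (vtx a s : GadgetVertex C l) = vtx b t ↔ a = b ∧ s = t :=
  Sum.inl_injective.eq_iff.trans Prod.mk_inj

@[simp] theorem iso_ne_vtx {a : M} {t : Fin (d + d)} {j : Fin l} :
    (iso j : GadgetVertex C l) ≠ vtx a t :=
  Sum.inr_ne_inl

theorem holds_iff {p : GadgetPred u d} {x : GadgetVertex C l} :
    Holds u d p x ↔ vertexPred C p x := by
  show vertexPred C ((Fintype.equivFin _).symm (Fintype.equivFin _ p)) x ↔ _
  rw [Equiv.symm_apply_apply]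

@[simp] theorem holds_vtx {p : GadgetPred u d} {a : M} {t : Fin (d + d)} :
    Holds u d p (vtx a t : GadgetVertex C l) ↔ vertexPred (l := l) C p (.inl (a, t)) :=
  holds_iff

@[simp] theorem holds_iso {p : GadgetPred u d} {j : Fin l} :
    Holds u d p (iso j : GadgetVertex C l) ↔ vertexPred C p (.inr j) :=
  holds_iff

theorem edge_vtx_iff {a b : M} {s t : Fin (d + d)} :
    Edge u d (vtx a s : GadgetVertex C l) (vtx b t) ↔
      (a = b ∧ (s.val + 1 = t.val ∨ t.val + 1 = s.val)) ∨
        CrossEdge u (a, s) (b, t) ∨ CrossEdge u (b, t) (a, s) :=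
  Iff.rfl

theorem not_edge_iso {j : Fin l} {y : GadgetVertex C l} : ¬Edge u d (iso j) y := id

theorem not_edge_vtx_iso {a : M} {t : Fin (d + d)} {j : Fin l} :
    ¬Edge u d (vtx a t : GadgetVertex C l) (iso j) := id

theorem edge_symm {x y : GadgetVertex C l} (h : Edge u d x y) : Edge u d y x := by
  obtain ⟨a, s, rfl⟩ | ⟨j, rfl⟩ := x.exists_eq
  · obtain ⟨b, t, rfl⟩ | ⟨j, rfl⟩ := y.exists_eq
    · rcases edge_vtx_iff.1 h with ⟨rfl, hst⟩ | hc | hc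
      exacts [Or.inl ⟨rfl, hst.symm⟩, Or.inr (Or.inr hc), Or.inr (Or.inl hc)]
    · exact (not_edge_vtx_iso h).elim
  · exact (not_edge_iso h).elim

theorem CrossEdge.color_ne {x y : M × Fin (d + d)} (h : CrossEdge u x y) : C x.1 ≠ C y.1 := by
  obtain ⟨hne, i, -, -, hi⟩ := h
  exact C.valid (conflictGraph_adj.2 ⟨hne, Or.inl ⟨i, hi⟩⟩)

theorem step_iff {s t : Fin (d + d)} (hst : t.val = s.val + 1) {x y : GadgetVertex C l} :
    Step u d s t x y ↔ ∃ a, x = vtx a s ∧ y = vtx a t := by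
  constructor
  · rintro ⟨hx, hy, hxy, c, hcx, hcy⟩
    obtain ⟨a, s', rfl⟩ | ⟨j, rfl⟩ := x.exists_eq <;>
      obtain ⟨b, t', rfl⟩ | ⟨j', rfl⟩ := y.exists_eq <;>
      simp only [holds_vtx, holds_iso, vertexPred, Option.some.injEq, reduceCtorEq]
        at hx hy hcx hcy
    subst hx hy
    rcases edge_vtx_iff.1 hxy with ⟨rfl, -⟩ | h | h
    · exact ⟨a, rfl, rfl⟩
    · exact absurd (hcx.trans hcy.symm) h.color_ne
    · exact absurd (hcy.trans hcx.symm) h.color_ne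
  · rintro ⟨a, rfl, rfl⟩
    refine ⟨by simp [vertexPred], by simp [vertexPred], Or.inl ⟨rfl, Or.inl hst.symm⟩, C a, ?_⟩
    simp [vertexPred]

theorem isGadget_vtx (a : M) : IsGadget u d (vtx a : Fin (d + d) → GadgetVertex C l) :=
  fun _ _ hst => (step_iff hst).2 ⟨a, rfl, rfl⟩

theorem edge_cross_iff {i : Fin d} {a b : M} (hab : a ≠ b) :
    Edge u d (vtx a (Fin.castAdd d i) : GadgetVertex C l) (vtx b (Fin.natAdd d i)) ↔
      Arrow u i a b := by
  rw [edge_vtx_iff]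
  constructor
  · rintro (⟨rfl, -⟩ | ⟨-, j, hj, -, h⟩ | ⟨-, j, hj, -⟩)
    · exact absurd rfl hab
    · rwa [Fin.castAdd_injective _ _ hj]
    · have := congrArg Fin.val hj
      simp at this
      omega
  · exact fun h => Or.inr (Or.inl ⟨hab, i, rfl, rfl, h⟩)

section Link

variable [NeZero d]

theorem IsGadget.eq_vtx {g : Fin (d + d) → GadgetVertex C l} (hg : IsGadget u d g) {a : M}
    (ha : g p₀ = vtx a p₀) : g = vtx a := by
  funext ⟨k, hk⟩
  induction k with
  | zero => exact ha
  | succ k ih =>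
    obtain ⟨b, hb, hb'⟩ := (step_iff rfl).1 (hg ⟨k, by omega⟩ ⟨k + 1, hk⟩ rfl)
    rw [ih (by omega), vtx_inj] at hb
    rw [hb', hb.1]

theorem isAt_vtx_iff {t : Fin (d + d)} {a : M} {y : GadgetVertex C l} :
    IsAt u d t (vtx a p₀) y ↔ y = vtx a t := by
  constructor
  · rintro ⟨g, hg, hg₀, rfl⟩
    rw [hg.eq_vtx hg₀]
  · rintro rfl
    exact ⟨vtx a, isGadget_vtx a, rfl, rfl⟩

theorem linked_vtx_iff {i : Fin d} {a b : M} :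
    Linked u d i (vtx a p₀ : GadgetVertex C l) (vtx b p₀) ↔ Arrow u i a b := by
  constructor
  · rintro (⟨h, hloop⟩ | ⟨hne, x', y', hx', hy', hxy⟩)
    · obtain rfl := (vtx_inj.1 h).1
      simpa [vertexPred] using hloop
    · rw [isAt_vtx_iff] at hx' hy'
      subst hx' hy'
      exact (edge_cross_iff fun hab => hne (by rw [hab])).1 hxy
  · intro h
    by_cases hab : a = b
    · subst hab
      exact Or.inl ⟨rfl, by simpa [vertexPred]⟩
    · exact Or.inr ⟨by simpa using hab, _, _, isAt_vtx_iff.2 rfl, isAt_vtx_iff.2 rfl,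
        (edge_cross_iff hab).2 h⟩

end Link

theorem encard_isolated : {x : GadgetVertex C l | Holds u d (label none) x}.encard = l := by
  have hset : {x : GadgetVertex C l | Holds u d (label none) x} = iso '' Set.univ := by
    ext x
    obtain ⟨a, t, rfl⟩ | ⟨j, rfl⟩ := x.exists_eq <;> simp [vertexPred]
  have hiso : Function.Injective (iso : Fin l → GadgetVertex C l) := Sum.inr_injective
  rw [hset, hiso.encard_image, Set.encard_univ, ENat.card_eq_coe_fintype_card, Fintype.card_fin]

theorem existsUnique_label (x : GadgetVertex C l) : ∃! o, Holds u d (label o) x := by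
  obtain ⟨a, t, rfl⟩ | ⟨j, rfl⟩ := x.exists_eq
  · exact ⟨some t, by simp [vertexPred], fun o ho => by simpa [vertexPred] using ho⟩
  · exact ⟨none, by simp [vertexPred], fun o ho => by simpa [vertexPred] using ho⟩

theorem existsUnique_step_right {s t : Fin (d + d)} (hst : t.val = s.val + 1)
    {x : GadgetVertex C l} (hx : Holds u d (label (some s)) x) : ∃! y, Step u d s t x y := by
  obtain ⟨a, s', rfl⟩ | ⟨j, rfl⟩ := x.exists_eq <;>
    simp only [holds_vtx, holds_iso, vertexPred, Option.some.injEq, reduceCtorEq] at hx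
  subst hx
  refine ⟨vtx a t, (step_iff hst).2 ⟨a, rfl, rfl⟩, fun y hy => ?_⟩
  obtain ⟨b, hb, rfl⟩ := (step_iff hst).1 hy
  rw [(vtx_inj.1 hb).1]

theorem existsUnique_step_left {s t : Fin (d + d)} (hst : t.val = s.val + 1)
    {y : GadgetVertex C l} (hy : Holds u d (label (some t)) y) : ∃! x, Step u d s t x y := by
  obtain ⟨a, t', rfl⟩ | ⟨j, rfl⟩ := y.exists_eq <;>
    simp only [holds_vtx, holds_iso, vertexPred, Option.some.injEq, reduceCtorEq] at hy
  subst hy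
  refine ⟨vtx a s, (step_iff hst).2 ⟨a, rfl, rfl⟩, fun x hx => ?_⟩
  obtain ⟨b, rfl, hb⟩ := (step_iff hst).1 hx
  rw [(vtx_inj.1 hb).1]

theorem realize_interpret_gadgetVertex [NeZero d] {φ : (pifLang u d).Sentence} (hφ : M ⊨ φ) :
    GadgetVertex C l ⊨ BoundedFormula.interpret (holdsF (label (some p₀)) 0) (linkRel u d) φ := by
  refine (Sentence.realize_interpret (fun a => (vtx a p₀ : GadgetVertex C l))
    (fun a b h => (vtx_inj.1 h).1) (fun y => ?_) (fun {k} R xs => ?_) φ).2 hφ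
  · rw [realize_holdsF]
    obtain ⟨a, t, rfl⟩ | ⟨j, rfl⟩ := y.exists_eq <;> simp [vertexPred, eq_comm]
  · match k, R with
    | 1, j =>
      simp only [linkRel, realize_holdsF, Function.comp_apply, holds_vtx, vertexPred]
      rw [show ![xs 0] = xs from funext fun i => by fin_cases i; rfl]
    | 2, i =>
      refine realize_linkF.trans (linked_vtx_iff.trans ?_)
      show Structure.RelMap (pifRel u d i) ![xs 0, xs 1] ↔ _
      rw [show ![xs 0, xs 1] = xs from funext fun i => by fin_cases i <;> rfl]
      rfl

variable (hpif : IsPIFStructure (inferInstance : (pifLang u d).Structure M))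
include hpif

theorem CrossEdge.right_unique {x y y' : M × Fin (d + d)} (h : CrossEdge u x y)
    (h' : CrossEdge u x y') : y = y' := by
  obtain ⟨-, i, hx, hy, hi⟩ := h
  obtain ⟨-, i', hx', hy', hi'⟩ := h'
  obtain rfl : i = i' := Fin.castAdd_injective _ _ (hx.symm.trans hx')
  exact Prod.ext ((hpif i).1 _ _ _ hi hi') (hy.trans hy'.symm)

theorem CrossEdge.left_unique {x x' y : M × Fin (d + d)} (h : CrossEdge u x y)
    (h' : CrossEdge u x' y) : x = x' := by
  obtain ⟨-, i, hx, hy, hi⟩ := h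
  obtain ⟨-, i', hx', hy', hi'⟩ := h'
  obtain rfl : i = i' := Fin.natAdd_injective _ _ (hy.symm.trans hy')
  exact Prod.ext ((hpif i).2 _ _ _ hi hi') (hx.trans hx'.symm)

omit hpif in
theorem CrossEdge.not_flip {x y y' : M × Fin (d + d)} (h : CrossEdge u x y)
    (h' : CrossEdge u y' x) : False := by
  obtain ⟨-, i, hx, -⟩ := h
  obtain ⟨-, i', -, hx', -⟩ := h'
  have := congrArg Fin.val (hx.symm.trans hx')
  simp at this
  omega

theorem encard_edge_le (x : GadgetVertex C l) : {y | y ≠ x ∧ Edge u d x y}.encard ≤ 3 := by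
  obtain ⟨a, s, rfl⟩ | ⟨j, rfl⟩ := x.exists_eq
  · let up := {y : GadgetVertex C l | ∃ t : Fin (d + d), t.val = s.val + 1 ∧ y = vtx a t}
    let down := {y : GadgetVertex C l | ∃ t : Fin (d + d), s.val = t.val + 1 ∧ y = vtx a t}
    let cross := {y : GadgetVertex C l |
      ∃ z, (CrossEdge u (a, s) z ∨ CrossEdge u z (a, s)) ∧ y = vtx z.1 z.2}
    have hcover : {y | y ≠ vtx a s ∧ Edge u d (vtx a s) y} ⊆ ⋃ k, ![up, down, cross] k := by
      rintro y ⟨-, hy⟩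
      obtain ⟨b, t, rfl⟩ | ⟨j, rfl⟩ := y.exists_eq
      · rcases edge_vtx_iff.1 hy with ⟨rfl, ht | ht⟩ | h | h
        · exact Set.mem_iUnion.2 ⟨0, t, ht.symm, rfl⟩
        · exact Set.mem_iUnion.2 ⟨1, t, ht.symm, rfl⟩
        · exact Set.mem_iUnion.2 ⟨2, (b, t), Or.inl h, rfl⟩
        · exact Set.mem_iUnion.2 ⟨2, (b, t), Or.inr h, rfl⟩
      · exact (not_edge_vtx_iso hy).elim
    refine (Set.encard_le_card_of_subset_iUnion_subsingleton hcover fun k => ?_).trans (by simp)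
    fin_cases k
    · rintro _ ⟨t, ht, rfl⟩ _ ⟨t', ht', rfl⟩
      exact vtx_inj.2 ⟨rfl, Fin.ext (ht.trans ht'.symm)⟩
    · rintro _ ⟨t, ht, rfl⟩ _ ⟨t', ht', rfl⟩
      exact vtx_inj.2 ⟨rfl, Fin.ext (by omega)⟩
    · rintro _ ⟨z, hz, rfl⟩ _ ⟨z', hz', rfl⟩
      obtain rfl : z = z' := by
        rcases hz with h | h <;> rcases hz' with h' | h'
        exacts [h.right_unique hpif h', (h.not_flip h').elim, (h'.not_flip h).elim,
          h.left_unique hpif h']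
      rfl
  · have : {y | y ≠ iso j ∧ Edge u d (iso j : GadgetVertex C l) y} = ∅ :=
      Set.eq_empty_of_forall_notMem fun _ hy => not_edge_iso hy.2
    rw [this, Set.encard_empty]
    exact zero_le

theorem realize_gadgetSentence_gadgetVertex [NeZero d] {φ : (pifLang u d).Sentence}
    (hφ : M ⊨ φ) : GadgetVertex C l ⊨ gadgetSentence u d l φ :=
  realize_gadgetSentence.2 ⟨realize_labelAxiom.2 existsUnique_label,
    realize_isolatedAxiom.2 encard_isolated,
    Relations.realize_symmetric.2 ⟨fun _ _ => edge_symm⟩,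
    realize_stepAxiom.2 fun _ _ hst =>
      ⟨fun _ => existsUnique_step_right hst, fun _ => existsUnique_step_left hst⟩,
    realize_degreeAxiom.2 (encard_edge_le hpif), realize_interpret_gadgetVertex hφ⟩

end IntendedModel

theorem bdSpec3_of_pifSpectrum [NeZero d] {φ : (pifLang u d).Sentence}
    (hφ : ∀ M (St : (pifLang u d).Structure M), M ⊨ φ → IsPIFStructure St) (l : ℕ) :
    BDSpec3 {m : ℕ | ∃ n ∈ pifSpectrum φ, m = 2 * d * n + l} := by
  refine ⟨_, gadgetSentence u d l φ, fun N St h => symDeg3_of_realize_gadgetSentence h, ?_⟩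
  ext m
  constructor
  · rintro ⟨n, ⟨M, StM, hM, rfl, hpif, hφM⟩, rfl⟩
    obtain ⟨C⟩ := conflictGraph_colorable hpif
    exact ⟨GadgetVertex C l, inferInstance, inferInstance, card_gadgetVertex C l,
      realize_gadgetSentence_gadgetVertex hpif hφM⟩
  · rintro ⟨N, St, hN, rfl, h⟩
    have hdom := (Sentence.realize_interpret_iff φ).1 (realize_gadgetSentence.1 h).2.2.2.2.2
    refine ⟨_, ⟨_, _, inferInstance, rfl, hφ _ _ hdom, hdom⟩, ?_⟩
    rw [card_eq_of_realize_gadgetSentence h]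
    simp

end GadgetGraph

theorem bdSpec3_empty : BDSpec3 ∅ := by
  refine ⟨0, ⊥, fun _ _ h => (Formula.realize_bot.1 h).elim, ?_⟩
  ext m
  simp only [Set.mem_empty_iff_false, false_iff]
  rintro ⟨_, _, _, _, h⟩
  exact Formula.realize_bot.1 h

noncomputable def edgelessSentence (l : ℕ) : (graphLang 0).Sentence :=
  Formula.existsExactly l ⊤ ⊓
    Formula.all₁ (Formula.all₁
      ((graphE 0).formula₂ (var (Sum.inl (Sum.inr ()))) (var (Sum.inr ()))).not)

theorem realize_edgelessSentence {N : Type} [(graphLang 0).Structure N] {l : ℕ} :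
    N ⊨ edgelessSentence l ↔
      ENat.card N = l ∧ ∀ x y : N, ¬Structure.RelMap (graphE 0) ![x, y] := by
  simp [Sentence.Realize, edgelessSentence]

theorem bdSpec3_singleton (l : ℕ) : BDSpec3 {l} := by
  refine ⟨0, edgelessSentence l, fun N St h => ?_, ?_⟩
  · obtain ⟨-, hE⟩ := realize_edgelessSentence.1 h
    refine ⟨fun a b hab => (hE a b hab).elim, fun v => ?_⟩
    have : {w : N | w ≠ v ∧ Structure.RelMap (graphE 0) ![v, w]} = ∅ :=
      Set.eq_empty_of_forall_notMem fun w hw => hE v w hw.2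
    simp [this]
  · ext m
    rw [Set.mem_singleton_iff]
    constructor
    · rintro rfl
      let _ := graphStructure (U := 0) (V := Fin m) (fun _ _ => False) (fun _ _ => False)
      exact ⟨Fin m, inferInstance, inferInstance, Nat.card_fin m,
        realize_edgelessSentence.2 ⟨by simp, fun _ _ => id⟩⟩
    · rintro ⟨N, St, hN, rfl, h⟩
      have := (realize_edgelessSentence.1 h).1
      rwa [ENat.card_eq_coe_natCard, Nat.cast_inj] at this

/-- if S ∈ PIFSpec_d then {2dn + l : n ∈ S} ∈ BDSpec_3. -/
theorem stmt_12 (d : ℕ) (S : Set ℕ) (hS : PIFSpec d S) (l : ℕ) :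
    BDSpec3 {m : ℕ | ∃ n ∈ S, m = 2 * d * n + l} := by
  obtain ⟨u, φ, hφ, rfl⟩ := hS
  rcases Nat.eq_zero_or_pos d with rfl | hd
  · rcases (pifSpectrum φ).eq_empty_or_nonempty with h | ⟨n, hn⟩
    · simpa [h] using bdSpec3_empty
    · convert bdSpec3_singleton l using 1
      ext m
      simp only [mul_zero, zero_mul, zero_add, Set.mem_ofPred_eq, Set.mem_singleton_iff]
      exact ⟨fun ⟨_, _, hm⟩ => hm, fun hm => ⟨n, hn, hm⟩⟩
  · have : NeZero d := ⟨hd.ne'⟩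
    exact GadgetGraph.bdSpec3_of_pifSpectrum hφ l
end
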